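/- arXiv:2003.02915 — 2 statements merged into one kernel-verified Lean document; each statement's English description precedes it below -/
import Mathlib

section
/- For all n ≥ k ≥ 1, LB_{n,k}(1/23, q) = RS_{n,k}(12/3, q) as polynomials in q, where both equal Σ_{j=1}^{k} q^{j-1} when n > k and equal 1 when n = k. -/
open Finset Polynomial

/-- Set partitions of `[n] = {1, …, n}`, modeled as finpartitions of `Fin n`. -/
abbrev SP (n : ℕ) := Finpartition (Finset.univ : Finset (Fin n))

noncomputable instance (n : ℕ) : Fintype (SP n) :=
  Fintype.ofInjective Finpartition.parts fun _ _ h => Finpartition.ext h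

/-- `i` and `j` lie in the same block of the set partition `P`. -/
def inSameBlock {n : ℕ} (P : SP n) (i j : Fin n) : Prop :=
  ∃ B ∈ P.parts, i ∈ B ∧ j ∈ B

/-- `P` avoids the pattern `1/2/3`: no three elements lie in three pairwise distinct blocks. -/
def avoids1_2_3 {n : ℕ} (P : SP n) : Prop :=
  ¬ ∃ a b c : Fin n, a < b ∧ b < c ∧
    ¬ inSameBlock P a b ∧ ¬ inSameBlock P b c ∧ ¬ inSameBlock P a c

/-- `P` avoids the pattern `13/2`. -/
def avoids13_2 {n : ℕ} (P : SP n) : Prop :=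
  ¬ ∃ a b c : Fin n, a < b ∧ b < c ∧ inSameBlock P a c ∧ ¬ inSameBlock P a b

/-- `P` avoids the pattern `1/23`. -/
def avoids1_23 {n : ℕ} (P : SP n) : Prop :=
  ¬ ∃ a b c : Fin n, a < b ∧ b < c ∧ inSameBlock P b c ∧ ¬ inSameBlock P a b

/-- `P` avoids the pattern `12/3`. -/
def avoids12_3 {n : ℕ} (P : SP n) : Prop :=
  ¬ ∃ a b c : Fin n, a < b ∧ b < c ∧ inSameBlock P a b ∧ ¬ inSameBlock P a c

/-- `P` avoids the pattern `123`: every block has at most two elements. -/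
def avoids123 {n : ℕ} (P : SP n) : Prop :=
  ∀ B ∈ P.parts, B.card ≤ 2

/-- The block of `P` containing `i`. -/
def blockOf {n : ℕ} (P : SP n) (i : Fin n) : Finset (Fin n) :=
  (P.parts.filter (fun B => i ∈ B)).sup id

/-- The restricted growth function of `P`: the letter at position `i` is the index
(starting from 1) of the block containing `i`, blocks being ordered by increasing minima. -/
def rgf {n : ℕ} (P : SP n) (i : Fin n) : ℕ :=
  (P.parts.filter (fun B => B.min ≤ (blockOf P i).min)).card

/-- The left-bigger statistic of Wachs and White. -/
def lbStat {n : ℕ} (w : Fin n → ℕ) : ℕ :=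
  ∑ j : Fin n, (((Finset.univ.filter (fun i => i < j)).image w).filter (fun v => w j < v)).card

/-- The left-smaller statistic of Wachs and White. -/
def lsStat {n : ℕ} (w : Fin n → ℕ) : ℕ :=
  ∑ j : Fin n, (((Finset.univ.filter (fun i => i < j)).image w).filter (fun v => v < w j)).card

/-- The right-bigger statistic of Wachs and White. -/
def rbStat {n : ℕ} (w : Fin n → ℕ) : ℕ :=
  ∑ j : Fin n, (((Finset.univ.filter (fun i => j < i)).image w).filter (fun v => w j < v)).card

/-- The right-smaller statistic of Wachs and White. -/
def rsStat {n : ℕ} (w : Fin n → ℕ) : ℕ :=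
  ∑ j : Fin n, (((Finset.univ.filter (fun i => j < i)).image w).filter (fun v => v < w j)).card

open Classical in
/-- The generating function `∑ q^{stat(π)}` over `k`-block partitions of `[n]` avoiding
a given family of patterns (described by the avoidance predicate `avoid`). -/
noncomputable def genPoly (n k : ℕ) (avoid : SP n → Prop) (stat : (Fin n → ℕ) → ℕ) :
    Polynomial ℕ :=
  ∑ P ∈ Finset.univ.filter (fun P : SP n => P.parts.card = k ∧ avoid P),
    Polynomial.X ^ (stat (rgf P))


/-!
A block with two elements `b < c` of a `1/23`-avoiding partition contains every `a < b`. Hence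
every non-singleton block contains `0`, so there is at most one, and removing its maximum `t`
leaves an initial segment. A `k`-block partition with `k < n` is therefore
`{0, …, n-k-1, t} ∪ singletons` with `n - k ≤ t`. Its RGF is `1` on the big block and
increasing elsewhere, so the only left-bigger letters are the `t - (n - k)` letters just
before `t`. Dually, a `12/3`-avoiding one is `{s, k, …, n-1} ∪ singletons` with `s < k`. Its RGF
is `1, 2, …, k, s+1, …, s+1`, and the right-smaller pairs are the positions strictly between `s`
and `k`, which gives `k - 1 - s`. Both families realise each exponent `0, …, k-1` exactly once.
For `k = n` only the discrete partition remains, and its RGF is increasing.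
-/
namespace Finpartition

section Parts

variable {α : Type*} [DecidableEq α] {s : Finset α} (P : Finpartition s)

lemma card_le_one_of_card_parts_eq (h : #P.parts = #s) {C : Finset α} (hC : C ∈ P.parts) :
    #C ≤ 1 := by
  by_contra! hC1
  have : ∑ _ ∈ P.parts, 1 < ∑ D ∈ P.parts, #D :=
    Finset.sum_lt_sum (fun D hD => (P.nonempty_of_mem_parts hD).card_pos) ⟨C, hC, hC1⟩
  rw [P.sum_card_parts, ← card_eq_sum_ones] at this
  omega

end Parts

section WithBlock

variable {α : Type*} [Fintype α] [DecidableEq α]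

def withBlock (B : Finset α) (hB : B.Nonempty) : Finpartition (univ : Finset α) :=
  (⊥ : Finpartition Bᶜ).extend hB.ne_empty disjoint_compl_left (by simp)

variable {B : Finset α} (hB : B.Nonempty)

lemma parts_withBlock :
    (withBlock B hB).parts = insert B (Bᶜ.map ⟨singleton, singleton_injective⟩) := by
  simp [withBlock]

lemma card_parts_withBlock : #(withBlock B hB).parts = #Bᶜ + 1 := by
  rw [withBlock, card_extend, card_bot]

lemma part_withBlock_of_mem {i : α} (hi : i ∈ B) : (withBlock B hB).part i = B :=
  part_eq_of_mem _ (by simp [parts_withBlock]) hi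

lemma part_withBlock_of_notMem {i : α} (hi : i ∉ B) : (withBlock B hB).part i = {i} :=
  part_eq_of_mem _ (by simp [parts_withBlock, hi]) (mem_singleton_self i)

lemma card_add_card_parts_withBlock : #B + #(withBlock B hB).parts = Fintype.card α + 1 := by
  rw [card_parts_withBlock, card_compl]
  have := card_le_univ B
  omega

lemma mem_part_withBlock {i j : α} :
    i ∈ (withBlock B hB).part j ↔ i = j ∨ (i ∈ B ∧ j ∈ B) := by
  by_cases hj : j ∈ B
  · rw [part_withBlock_of_mem hB hj]; grind
  · rw [part_withBlock_of_notMem hB hj]; grind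

lemma eq_withBlock (P : Finpartition (univ : Finset α)) (hBP : B ∈ P.parts)
    (h : ∀ C ∈ P.parts, C ≠ B → #C ≤ 1) :
    P = withBlock B (P.nonempty_of_mem_parts hBP) := by
  have part_eq {i : α} (hi : i ∉ B) : P.part i = {i} := by
    have hne : P.part i ≠ B := fun h => hi (h ▸ P.mem_part (mem_univ i))
    refine eq_singleton_iff_unique_mem.mpr ⟨P.mem_part (mem_univ i), fun j hj => ?_⟩
    exact card_le_one.mp (h _ (P.part_mem.mpr (mem_univ i)) hne) _ hj _ (P.mem_part (mem_univ i))
  refine Finpartition.ext (Finset.ext fun C => ?_)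
  rw [parts_withBlock, mem_insert, mem_map]
  constructor
  · intro hC
    refine or_iff_not_imp_left.mpr fun hCB => ?_
    obtain ⟨i, hi⟩ := P.nonempty_of_mem_parts hC
    have hiB : i ∉ B := fun hiB => hCB (P.eq_of_mem_parts hC hBP hi hiB)
    exact ⟨i, mem_compl.mpr hiB, (part_eq hiB).symm.trans (P.part_eq_of_mem hC hi)⟩
  · rintro (rfl | ⟨i, hi, rfl⟩)
    · exact hBP
    · change {i} ∈ P.parts
      rw [← part_eq (mem_compl.mp hi)]
      exact P.part_mem.mpr (mem_univ i)

end WithBlock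

end Finpartition

open Finpartition

section RGF

variable {n : ℕ}

lemma inSameBlock_iff_mem_part {P : SP n} {i j : Fin n} : inSameBlock P i j ↔ i ∈ P.part j :=
  P.mem_part_iff_exists.symm

lemma blockOf_eq_part (P : SP n) (i : Fin n) : blockOf P i = P.part i := by
  have : P.parts.filter (i ∈ ·) = {P.part i} := by
    ext C
    simp only [mem_filter, mem_singleton]
    constructor
    · rintro ⟨hC, hi⟩
      exact (P.part_eq_of_mem hC hi).symm
    · rintro rfl
      exact ⟨P.part_mem.mpr (mem_univ i), P.mem_part (mem_univ i)⟩
  simp [blockOf, this]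

lemma rgf_eq_card_filter_image_min (P : SP n) (i : Fin n) :
    rgf P i = #((P.parts.image Finset.min).filter (· ≤ (P.part i).min)) := by
  rw [rgf, blockOf_eq_part, filter_image, card_image_of_injOn]
  rintro C hC D hD hCD
  have hC' := (mem_filter.mp hC).1
  obtain ⟨c, hc⟩ := Finset.min_of_nonempty (P.nonempty_of_mem_parts hC')
  exact P.eq_of_mem_parts hC' (mem_filter.mp hD).1 (mem_of_min hc) (mem_of_min (hCD ▸ hc))

-- The block minima of `withBlock B hB` are `B.min' hB` and the points outside `B`.
lemma rgf_withBlock {B : Finset (Fin n)} (hB : B.Nonempty) (i : Fin n) :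
    rgf (withBlock B hB) i =
      #((insert (B.min' hB) Bᶜ).filter (· ≤ if i ∈ B then B.min' hB else i)) := by
  have hparts : (withBlock B hB).parts.image Finset.min =
      (insert (B.min' hB) Bᶜ).image (↑) := by
    rw [parts_withBlock, image_insert, image_insert, map_eq_image, image_image, coe_min']
    exact congrArg _ (image_congr fun x _ => min_singleton)
  have hmin : ((withBlock B hB).part i).min = ↑(if i ∈ B then B.min' hB else i) := by
    split_ifs with hi
    · rw [part_withBlock_of_mem hB hi, coe_min']
    · rw [part_withBlock_of_notMem hB hi, min_singleton]
  rw [rgf_eq_card_filter_image_min, hparts, hmin, filter_image,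
    card_image_of_injective _ WithTop.coe_injective]
  simp only [WithTop.coe_le_coe]

variable {B : Finset (Fin n)} (hB : B.Nonempty)

lemma rgf_withBlock_of_mem {i : Fin n} (hi : i ∈ B) :
    rgf (withBlock B hB) i = rgf (withBlock B hB) (B.min' hB) := by
  simp only [rgf_withBlock, hi, min'_mem, if_true]

lemma rgf_withBlock_lt_of_notMem {i j : Fin n} (hj : j ∉ B)
    (hij : (if i ∈ B then B.min' hB else i) < j) :
    rgf (withBlock B hB) i < rgf (withBlock B hB) j := by
  rw [rgf_withBlock, rgf_withBlock, if_neg hj]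
  refine card_lt_card ⟨fun x hx => ?_, fun h => ?_⟩
  · simp only [mem_filter] at hx ⊢
    exact ⟨hx.1, hx.2.trans hij.le⟩
  have hjU : j ∈ (insert (B.min' hB) Bᶜ).filter (· ≤ j) := by simp [hj]
  exact (not_le.mpr hij) (mem_filter.mp (h hjU)).2

end RGF

section Statistics

variable {n : ℕ}

lemma lbStat_eq_zero_of_monotone {w : Fin n → ℕ} (hw : Monotone w) : lbStat w = 0 := by
  refine sum_eq_zero fun j _ => card_eq_zero.mpr (filter_eq_empty_iff.mpr fun v hv => ?_)
  obtain ⟨i, hi, rfl⟩ := mem_image.mp hv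
  exact not_lt.mpr (hw (mem_filter.mp hi).2.le)

lemma rsStat_eq_zero_of_monotone {w : Fin n → ℕ} (hw : Monotone w) : rsStat w = 0 := by
  refine sum_eq_zero fun j _ => card_eq_zero.mpr (filter_eq_empty_iff.mpr fun v hv => ?_)
  obtain ⟨i, hi, rfl⟩ := mem_image.mp hv
  exact not_lt.mpr (hw (mem_filter.mp hi).2.le)

lemma lbStat_eq_of_forall_le {w : Fin n → ℕ} (t : Fin n)
    (hw : ∀ i j, i < j → j ≠ t → w i ≤ w j) :
    lbStat w = #(((univ.filter (· < t)).image w).filter (w t < ·)) := by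
  refine sum_eq_single t (fun j _ hjt => card_eq_zero.mpr ?_) (by simp)
  refine filter_eq_empty_iff.mpr fun v hv => ?_
  obtain ⟨i, hi, rfl⟩ := mem_image.mp hv
  exact not_lt.mpr (hw i j (mem_filter.mp hi).2 hjt)

lemma rsStat_increasing_then_const {k s : ℕ} (hs : s < k) (hk : k < n) :
    rsStat (fun i : Fin n => if i.val < k then i.val + 1 else s + 1) = k - 1 - s := by
  have hterm (j : Fin n) :
      ((univ.filter (j < ·)).image fun i : Fin n => if i.val < k then i.val + 1 else s + 1).filter
        (· < if j.val < k then j.val + 1 else s + 1) =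
      if s < j.val ∧ j.val < k then {s + 1} else ∅ := by
    ext v
    simp only [mem_filter, mem_image, mem_univ, true_and, Fin.lt_def]
    constructor
    · rintro ⟨⟨i, hji, rfl⟩, hlt⟩
      split_ifs at * <;> simp only [mem_singleton, notMem_empty] <;> omega
    · intro hv
      split_ifs at hv with h
      · refine ⟨⟨⟨k, hk⟩, h.2, ?_⟩, ?_⟩ <;> simp_all
      · simp at hv
  rw [rsStat, sum_congr rfl fun j _ => by rw [hterm j, apply_ite card, card_singleton, card_empty],
    sum_boole, Nat.cast_id]
  have : univ.filter (fun j : Fin n => s < j.val ∧ j.val < k) =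
      Ioo ⟨s, hs.trans hk⟩ ⟨k, hk⟩ := by
    ext j; simp [Fin.lt_def]
  rw [this, Fin.card_Ioo, Fin.val_mk, Fin.val_mk]
  omega

end Statistics

section LowerUpper

variable {n : ℕ} {S : Finset (Fin n)}

lemma Fin.mem_iff_val_lt_card_of_isLowerSet (hS : IsLowerSet (S : Set (Fin n))) (i : Fin n) :
    i ∈ S ↔ i.val < #S := by
  constructor
  · intro hi
    have : Iic i ⊆ S := fun j hj => hS (mem_Iic.mp hj) hi
    simpa using card_le_card this
  · intro hi
    by_contra hiS
    have : S ⊆ Iio i := fun j hj => mem_Iio.mpr (not_le.mp fun hij => hiS (hS hij hj))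
    have := card_le_card this
    rw [Fin.card_Iio] at this
    omega

lemma Fin.mem_iff_sub_card_le_val_of_isUpperSet (hS : IsUpperSet (S : Set (Fin n))) (i : Fin n) :
    i ∈ S ↔ n - #S ≤ i.val := by
  constructor
  · intro hi
    have : Ici i ⊆ S := fun j hj => hS (mem_Ici.mp hj) hi
    have := card_le_card this
    rw [Fin.card_Ici] at this
    omega
  · intro hi
    by_contra hiS
    have : S ⊆ Ioi i := fun j hj => mem_Ioi.mpr (not_le.mp fun hji => hiS (hS hji hj))
    have := card_le_card this
    rw [Fin.card_Ioi] at this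
    omega

end LowerUpper

section Blocks

variable {n : ℕ}

def lowBlock (m : ℕ) (t : Fin n) : Finset (Fin n) := univ.filter fun i => i.val < m ∨ i = t

def highBlock (m : ℕ) (s : Fin n) : Finset (Fin n) := univ.filter fun i => m ≤ i.val ∨ i = s

@[simp]
lemma mem_lowBlock {m : ℕ} {t i : Fin n} : i ∈ lowBlock m t ↔ i.val < m ∨ i = t := by
  simp [lowBlock]

@[simp]
lemma mem_highBlock {m : ℕ} {s i : Fin n} : i ∈ highBlock m s ↔ m ≤ i.val ∨ i = s := by
  simp [highBlock]

lemma lowBlock_nonempty (m : ℕ) (t : Fin n) : (lowBlock m t).Nonempty := ⟨t, by simp⟩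

lemma highBlock_nonempty (m : ℕ) (s : Fin n) : (highBlock m s).Nonempty := ⟨s, by simp⟩

lemma card_lowBlock {m : ℕ} {t : Fin n} (ht : m ≤ t.val) : #(lowBlock m t) = m + 1 := by
  have : lowBlock m t = insert t (univ.filter fun i : Fin n => i.val < m) := by
    ext i; simp [or_comm]
  rw [this, card_insert_of_notMem (by simpa using ht), Fin.card_filter_val_lt]
  omega

lemma card_compl_highBlock {k : ℕ} {s : Fin n} (hs : s.val < k) (hk : k ≤ n) :
    #(highBlock k s)ᶜ = k - 1 := by
  have : (highBlock k s)ᶜ = (univ.filter fun i : Fin n => i.val < k).erase s := by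
    ext i; simp [and_comm]
  rw [this, card_erase_of_mem (by simpa using hs), Fin.card_filter_val_lt]
  omega

lemma card_parts_withBlock_lowBlock {k : ℕ} (hkn : k ≤ n) {t : Fin n} (ht : n - k ≤ t.val) :
    #(withBlock (lowBlock (n - k) t) (lowBlock_nonempty _ t)).parts = k := by
  rw [card_parts_withBlock, card_compl, Fintype.card_fin, card_lowBlock ht]
  omega

lemma card_parts_withBlock_highBlock {k : ℕ} (hkn : k ≤ n) {s : Fin n} (hs : s.val < k) :
    #(withBlock (highBlock k s) (highBlock_nonempty _ s)).parts = k := by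
  rw [card_parts_withBlock, card_compl_highBlock hs hkn]
  omega

lemma avoids1_23_withBlock_lowBlock (m : ℕ) (t : Fin n) :
    avoids1_23 (withBlock (lowBlock m t) (lowBlock_nonempty m t)) := by
  rintro ⟨a, b, c, hab, hbc, hbc', hab'⟩
  simp only [inSameBlock_iff_mem_part, mem_part_withBlock, mem_lowBlock, Fin.ext_iff,
    Fin.lt_def] at *
  omega

lemma avoids12_3_withBlock_highBlock (m : ℕ) (s : Fin n) :
    avoids12_3 (withBlock (highBlock m s) (highBlock_nonempty m s)) := by
  rintro ⟨a, b, c, hab, hbc, hab', hac'⟩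
  simp only [inSameBlock_iff_mem_part, mem_part_withBlock, mem_highBlock, Fin.ext_iff,
    Fin.lt_def] at *
  omega

end Blocks

section Classification

variable {n : ℕ} {P : SP n}

lemma mem_of_avoids1_23 (hP : avoids1_23 P) {C : Finset (Fin n)} (hC : C ∈ P.parts)
    {a b c : Fin n} (hb : b ∈ C) (hc : c ∈ C) (hab : a < b) (hbc : b < c) : a ∈ C := by
  by_contra ha
  refine hP ⟨a, b, c, hab, hbc, ⟨C, hC, hb, hc⟩, fun ⟨D, hD, haD, hbD⟩ => ha ?_⟩
  exact P.eq_of_mem_parts hD hC hbD hb ▸ haD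

lemma mem_of_avoids12_3 (hP : avoids12_3 P) {C : Finset (Fin n)} (hC : C ∈ P.parts)
    {a b c : Fin n} (ha : a ∈ C) (hb : b ∈ C) (hab : a < b) (hbc : b < c) : c ∈ C := by
  by_contra hc
  refine hP ⟨a, b, c, hab, hbc, ⟨C, hC, ha, hb⟩, fun ⟨D, hD, haD, hcD⟩ => hc ?_⟩
  exact P.eq_of_mem_parts hD hC haD ha ▸ hcD

lemma eq_withBlock_part_zero (hP : avoids1_23 P) (hn : 0 < n) :
    P = withBlock (P.part ⟨0, hn⟩) (P.part_nonempty.mpr (mem_univ _)) := by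
  refine eq_withBlock P (P.part_mem.mpr (mem_univ _)) fun C hC hCB => ?_
  by_contra! hC1
  refine hCB (P.part_eq_of_mem hC (not_not.mp fun h0 => h0 ?_)).symm
  have hpos : (⟨0, hn⟩ : Fin n) < C.min' (P.nonempty_of_mem_parts hC) := by
    refine Fin.lt_def.mpr (Nat.pos_of_ne_zero fun h => h0 ?_)
    rw [show (⟨0, hn⟩ : Fin n) = C.min' _ from Fin.ext h.symm]
    exact min'_mem _ _
  exact mem_of_avoids1_23 hP hC (min'_mem _ _) (max'_mem _ _) hpos (min'_lt_max'_of_card _ hC1)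

lemma eq_withBlock_part_last (hP : avoids12_3 P) (hn : 0 < n) :
    P = withBlock (P.part ⟨n - 1, by omega⟩) (P.part_nonempty.mpr (mem_univ _)) := by
  refine eq_withBlock P (P.part_mem.mpr (mem_univ _)) fun C hC hCB => ?_
  by_contra! hC1
  refine hCB (P.part_eq_of_mem hC (not_not.mp fun hlast => hlast ?_)).symm
  have hlt : C.max' (P.nonempty_of_mem_parts hC) < ⟨n - 1, by omega⟩ := by
    refine Fin.lt_def.mpr (lt_of_le_of_ne (Nat.le_sub_one_of_lt (Fin.is_lt _)) fun h => hlast ?_)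
    rw [show (⟨n - 1, _⟩ : Fin n) = C.max' _ from Fin.ext h.symm]
    exact max'_mem _ _
  exact mem_of_avoids12_3 hP hC (min'_mem _ _) (max'_mem _ _) (min'_lt_max'_of_card _ hC1) hlt

lemma isLowerSet_erase_max' (hP : avoids1_23 P) {B : Finset (Fin n)} (hB : B ∈ P.parts)
    (hBne : B.Nonempty) : IsLowerSet ((B.erase (B.max' hBne) : Finset (Fin n)) : Set (Fin n)) := by
  intro a b hba ha
  rw [mem_coe, mem_erase] at ha ⊢
  have hat : a < B.max' hBne := lt_of_le_of_ne (le_max' _ _ ha.2) ha.1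
  rcases hba.eq_or_lt with rfl | hba
  · exact ha
  · exact ⟨(hba.trans hat).ne, mem_of_avoids1_23 hP hB ha.2 (max'_mem _ _) hba hat⟩

lemma isUpperSet_erase_min' (hP : avoids12_3 P) {B : Finset (Fin n)} (hB : B ∈ P.parts)
    (hBne : B.Nonempty) : IsUpperSet ((B.erase (B.min' hBne) : Finset (Fin n)) : Set (Fin n)) := by
  intro a b hab ha
  rw [mem_coe, mem_erase] at ha ⊢
  have hsa : B.min' hBne < a := lt_of_le_of_ne (min'_le _ _ ha.2) (Ne.symm ha.1)
  rcases hab.eq_or_lt with rfl | hab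
  · exact ha
  · exact ⟨(hsa.trans hab).ne', mem_of_avoids12_3 hP hB (min'_mem _ _) ha.2 hsa hab⟩

lemma exists_eq_withBlock_lowBlock (hP : avoids1_23 P) (hn : 0 < n) {k : ℕ}
    (hk : #P.parts = k) :
    ∃ t : Fin n, n - k ≤ t.val ∧
      P = withBlock (lowBlock (n - k) t) (lowBlock_nonempty _ t) := by
  set B := P.part ⟨0, hn⟩
  have hBP : B ∈ P.parts := P.part_mem.mpr (mem_univ _)
  have hBne : B.Nonempty := P.nonempty_of_mem_parts hBP
  have hPB : P = withBlock B hBne := eq_withBlock_part_zero hP hn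
  set t := B.max' hBne
  have hcard : #B + k = n + 1 := by
    have := card_add_card_parts_withBlock hBne
    rwa [← hPB, hk, Fintype.card_fin] at this
  have hmem (i : Fin n) : i ∈ B.erase t ↔ i.val < n - k := by
    rw [Fin.mem_iff_val_lt_card_of_isLowerSet (isLowerSet_erase_max' hP hBP hBne),
      card_erase_of_mem (max'_mem _ _)]
    omega
  refine ⟨t, not_lt.mp fun h => ((hmem t).mpr h |> mem_erase.mp).1 rfl, hPB.trans ?_⟩
  congr 1
  ext i
  rw [mem_lowBlock, ← hmem, mem_erase]
  by_cases hit : i = t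
  · simp [hit, t, max'_mem]
  · simp [hit]

lemma exists_eq_withBlock_highBlock (hP : avoids12_3 P) (hn : 0 < n) {k : ℕ}
    (hk : #P.parts = k) :
    ∃ s : Fin n, s.val < k ∧ P = withBlock (highBlock k s) (highBlock_nonempty _ s) := by
  set B := P.part ⟨n - 1, by omega⟩
  have hBP : B ∈ P.parts := P.part_mem.mpr (mem_univ _)
  have hBne : B.Nonempty := P.nonempty_of_mem_parts hBP
  have hPB : P = withBlock B hBne := eq_withBlock_part_last hP hn
  set s := B.min' hBne
  have hcard : #B + k = n + 1 := by
    have := card_add_card_parts_withBlock hBne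
    rwa [← hPB, hk, Fintype.card_fin] at this
  have hmem (i : Fin n) : i ∈ B.erase s ↔ k ≤ i.val := by
    rw [Fin.mem_iff_sub_card_le_val_of_isUpperSet (isUpperSet_erase_min' hP hBP hBne),
      card_erase_of_mem (min'_mem _ _)]
    have := hBne.card_pos
    omega
  refine ⟨s, not_le.mp fun h => ((hmem s).mpr h |> mem_erase.mp).1 rfl, hPB.trans ?_⟩
  congr 1
  ext i
  rw [mem_highBlock, ← hmem, mem_erase]
  by_cases his : i = s
  · simp [his, s, min'_mem]
  · simp [his]

end Classification

section Families

variable {n : ℕ}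

lemma rgf_withBlock_lowBlock_lt {m : ℕ} {t i j : Fin n} (hm : 0 < m) (hj : j ∉ lowBlock m t)
    (hij : i ∈ lowBlock m t ∨ i < j) :
    rgf (withBlock (lowBlock m t) (lowBlock_nonempty m t)) i <
      rgf (withBlock (lowBlock m t) (lowBlock_nonempty m t)) j := by
  refine rgf_withBlock_lt_of_notMem _ hj ?_
  split_ifs with hi
  · have hz : (⟨0, j.pos⟩ : Fin n) ∈ lowBlock m t := by simp [hm]
    refine (min'_le _ _ hz).trans_lt (Fin.lt_def.mpr ?_)
    show 0 < j.val
    simp only [mem_lowBlock, not_or] at hj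
    omega
  · exact hij.resolve_left hi

lemma lbStat_rgf_withBlock_lowBlock {m : ℕ} {t : Fin n} (hm : 0 < m) (ht : m ≤ t.val) :
    lbStat (rgf (withBlock (lowBlock m t) (lowBlock_nonempty m t))) = t.val - m := by
  set B := lowBlock m t
  set w := rgf (withBlock B (lowBlock_nonempty m t))
  have hwB {i : Fin n} (hi : i ∈ B) : w i = w t :=
    (rgf_withBlock_of_mem _ hi).trans (rgf_withBlock_of_mem _ (by simp [B])).symm
  have notMem_of_mem_Ico {i : Fin n} (hi : i ∈ Ico ⟨m, by omega⟩ t) : i ∉ B := by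
    simp [B, (mem_Ico.mp hi).2.ne, Fin.le_def.mp (mem_Ico.mp hi).1]
  have hleft : ((univ.filter (· < t)).image w).filter (w t < ·) =
      (Ico ⟨m, by omega⟩ t).image w := by
    ext v
    simp only [mem_filter, mem_image, mem_univ, true_and]
    constructor
    · rintro ⟨⟨i, hit, rfl⟩, hlt⟩
      have hiB : i ∉ B := fun hiB => (hwB hiB ▸ hlt).false
      simp only [B, mem_lowBlock, not_or] at hiB
      exact ⟨i, mem_Ico.mpr ⟨Fin.le_def.mpr (show m ≤ i.val by omega), hit⟩, rfl⟩
    · rintro ⟨i, hi, rfl⟩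
      exact ⟨⟨i, (mem_Ico.mp hi).2, rfl⟩,
        rgf_withBlock_lowBlock_lt hm (notMem_of_mem_Ico hi) (Or.inl (by simp))⟩
  rw [lbStat_eq_of_forall_le t, hleft, card_image_of_injOn, Fin.card_Ico, Fin.val_mk]
  · intro i hi j hj hij
    rcases lt_trichotomy i j with h | rfl | h
    · exact absurd hij (rgf_withBlock_lowBlock_lt hm (notMem_of_mem_Ico hj) (Or.inr h)).ne
    · rfl
    · exact absurd hij (rgf_withBlock_lowBlock_lt hm (notMem_of_mem_Ico hi) (Or.inr h)).ne'
  · intro i j hij hjt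
    by_cases hjB : j ∈ B
    · have hiB : i ∈ B := by
        simp only [B, mem_lowBlock, hjt, or_false] at hjB
        simp [B, Fin.lt_def.mp hij |>.trans hjB]
      rw [hwB hiB, hwB hjB]
    · exact (rgf_withBlock_lowBlock_lt hm hjB (Or.inr hij)).le

lemma rgf_withBlock_highBlock {k : ℕ} {s : Fin n} (hs : s.val < k) :
    rgf (withBlock (highBlock k s) (highBlock_nonempty k s)) =
      fun i => if i.val < k then i.val + 1 else s.val + 1 := by
  have hmin : (highBlock k s).min' (highBlock_nonempty k s) = s := by
    refine le_antisymm (min'_le _ _ (by simp)) (le_min' _ _ _ fun i hi => ?_)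
    simp only [mem_highBlock] at hi
    rcases hi with hi | rfl
    · exact Fin.le_def.mpr (by omega)
    · exact le_rfl
  have hU : insert s (highBlock k s)ᶜ = univ.filter fun i : Fin n => i.val < k := by
    ext i
    by_cases his : i = s <;> simp [his, hs]
  have hcount {j : Fin n} (hj : j.val < k) : #((univ.filter fun i : Fin n => i.val < k).filter
      (· ≤ j)) = j.val + 1 := by
    rw [← Fin.card_Iic]
    congr 1
    ext i
    simp only [mem_filter, mem_univ, true_and, mem_Iic, Fin.le_def]
    omega
  ext i
  rw [rgf_withBlock, hmin, hU]
  by_cases hi : i ∈ highBlock k s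
  · rw [if_pos hi, hcount hs]
    simp only [mem_highBlock] at hi
    rcases hi with hi | rfl
    · rw [if_neg (not_lt.mpr hi)]
    · rw [if_pos hs]
  · rw [if_neg hi]
    simp only [mem_highBlock, not_or, not_le] at hi
    rw [hcount hi.1, if_pos hi.1]

end Families

section Singletons

variable {n : ℕ} (hn : 0 < n)

lemma eq_withBlock_singleton_of_card_parts_eq {P : SP n} (hP : #P.parts = n) :
    P = withBlock {⟨0, hn⟩} (singleton_nonempty _) := by
  have hsmall {C : Finset (Fin n)} (hC : C ∈ P.parts) : #C ≤ 1 :=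
    card_le_one_of_card_parts_eq P (by rw [hP, card_univ, Fintype.card_fin]) hC
  have hz := P.mem_part (mem_univ (⟨0, hn⟩ : Fin n))
  have hpart : P.part ⟨0, hn⟩ = {⟨0, hn⟩} := eq_singleton_iff_unique_mem.mpr
    ⟨hz, fun i hi => card_le_one.mp (hsmall (P.part_mem.mpr (mem_univ _))) _ hi _ hz⟩
  exact eq_withBlock P (hpart ▸ P.part_mem.mpr (mem_univ _)) fun C hC _ => hsmall hC

lemma eq_of_inSameBlock_withBlock_singleton {i j : Fin n}
    (h : inSameBlock (withBlock {⟨0, hn⟩} (singleton_nonempty _)) i j) : i = j := by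
  rw [inSameBlock_iff_mem_part, mem_part_withBlock, mem_singleton, mem_singleton] at h
  rcases h with h | ⟨rfl, rfl⟩
  exacts [h, rfl]

lemma monotone_rgf_withBlock_singleton :
    Monotone (rgf (withBlock {(⟨0, hn⟩ : Fin n)} (singleton_nonempty _))) := by
  intro i j hij
  rcases hij.eq_or_lt with rfl | hij
  · exact le_rfl
  have hj : j ∉ ({⟨0, hn⟩} : Finset (Fin n)) := by
    simp only [mem_singleton, Fin.ext_iff]
    exact (Nat.zero_le _).trans_lt (Fin.lt_def.mp hij) |>.ne'
  refine (rgf_withBlock_lt_of_notMem _ hj ?_).le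
  split_ifs with hi
  · rw [mem_singleton.mp hi] at hij
    simpa using hij
  · exact hij

end Singletons

section GenPoly

variable {n : ℕ}

lemma genPoly_eq_sum_range {k m : ℕ} {avoid : SP n → Prop} {stat : (Fin n → ℕ) → ℕ}
    {ι : Type*} {I : Finset ι} (f : ι → SP n) (e : ι → ℕ)
    (hf : ∀ P : SP n, #P.parts = k ∧ avoid P ↔ ∃ i ∈ I, f i = P)
    (hstat : ∀ i ∈ I, stat (rgf (f i)) = e i) (he : Set.BijOn e I (range m)) :
    genPoly n k avoid stat = ∑ j ∈ range m, X ^ j := by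
  classical
  have hinj : Set.InjOn f I := fun i hi i' hi' h =>
    he.injOn hi hi' (by rw [← hstat i hi, ← hstat i' hi', h])
  have hset : univ.filter (fun P : SP n => #P.parts = k ∧ avoid P) = I.image f := by
    ext P
    simp [hf]
  rw [genPoly, hset, sum_image hinj]
  exact sum_nbij e (fun i hi => he.mapsTo hi) he.injOn he.surjOn fun i hi => by rw [hstat i hi]

lemma genPoly_avoids1_23_lbStat_of_lt {k : ℕ} (hkn : k < n) :
    genPoly n k avoids1_23 lbStat = ∑ j ∈ range k, X ^ j := by
  refine genPoly_eq_sum_range (I := univ.filter fun t : Fin n => n - k ≤ t.val)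
    (fun t => withBlock (lowBlock (n - k) t) (lowBlock_nonempty _ t)) (fun t => t.val - (n - k))
    (fun P => ⟨fun ⟨hP, hav⟩ => ?_, ?_⟩) (fun t ht => ?_)
    ⟨fun t ht => ?_, fun t ht t' ht' h => ?_, fun j hj => ?_⟩
  · obtain ⟨t, ht, rfl⟩ := exists_eq_withBlock_lowBlock hav (by omega) hP
    exact ⟨t, by simpa using ht, rfl⟩
  · rintro ⟨t, ht, rfl⟩
    exact ⟨card_parts_withBlock_lowBlock hkn.le (by simpa using ht),
      avoids1_23_withBlock_lowBlock _ _⟩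
  · exact lbStat_rgf_withBlock_lowBlock (by omega) (by simpa using ht)
  · simp only [mem_coe, mem_range, mem_filter, mem_univ, true_and] at ht ⊢
    have := t.isLt
    omega
  · simp only [mem_coe, mem_filter, mem_univ, true_and] at ht ht' h
    exact Fin.ext (by omega)
  · simp only [mem_coe, mem_range] at hj
    exact ⟨⟨n - k + j, by omega⟩, mem_filter.mpr ⟨mem_univ _, Nat.le_add_right _ _⟩,
      Nat.add_sub_cancel_left _ _⟩

lemma genPoly_avoids12_3_rsStat_of_lt {k : ℕ} (hkn : k < n) :
    genPoly n k avoids12_3 rsStat = ∑ j ∈ range k, X ^ j := by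
  refine genPoly_eq_sum_range (I := univ.filter fun s : Fin n => s.val < k)
    (fun s => withBlock (highBlock k s) (highBlock_nonempty _ s)) (fun s => k - 1 - s.val)
    (fun P => ⟨fun ⟨hP, hav⟩ => ?_, ?_⟩) (fun s hs => ?_)
    ⟨fun s hs => ?_, fun s hs s' hs' h => ?_, fun j hj => ?_⟩
  · obtain ⟨s, hs, rfl⟩ := exists_eq_withBlock_highBlock hav (by omega) hP
    exact ⟨s, by simpa using hs, rfl⟩
  · rintro ⟨s, hs, rfl⟩
    exact ⟨card_parts_withBlock_highBlock hkn.le (by simpa using hs),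
      avoids12_3_withBlock_highBlock _ _⟩
  · have hs : s.val < k := by simpa using hs
    rw [rgf_withBlock_highBlock hs, rsStat_increasing_then_const hs hkn]
  · simp only [mem_coe, mem_range, mem_filter, mem_univ, true_and] at hs ⊢
    omega
  · simp only [mem_coe, mem_filter, mem_univ, true_and] at hs hs' h
    exact Fin.ext (by omega)
  · simp only [mem_coe, mem_range] at hj
    refine ⟨⟨k - 1 - j, by omega⟩, mem_filter.mpr ⟨mem_univ _, ?_⟩, ?_⟩
    · show k - 1 - j < k
      omega
    · show k - 1 - (k - 1 - j) = j
      omega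

lemma genPoly_self_eq_one (hn : 0 < n) {avoid : SP n → Prop} {stat : (Fin n → ℕ) → ℕ}
    (havoid : avoid (withBlock {⟨0, hn⟩} (singleton_nonempty _)))
    (hstat : stat (rgf (withBlock {⟨0, hn⟩} (singleton_nonempty _))) = 0) :
    genPoly n n avoid stat = 1 := by
  set P₀ : SP n := withBlock {⟨0, hn⟩} (singleton_nonempty _)
  have h := genPoly_eq_sum_range (k := n) (avoid := avoid) (stat := stat) (m := 1)
    (I := (univ : Finset Unit)) (fun _ => P₀) (fun _ => 0) (fun P => ?_) (fun _ _ => hstat) ?_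
  · rwa [sum_range_one, pow_zero] at h
  · simp only [mem_univ, true_and, exists_const]
    constructor
    · exact fun ⟨hP, _⟩ => (eq_withBlock_singleton_of_card_parts_eq hn hP).symm
    · rintro rfl
      exact ⟨by rw [card_parts_withBlock, card_compl, Fintype.card_fin, card_singleton]; omega,
        havoid⟩
  · simp [Set.BijOn, Set.MapsTo, Set.InjOn, Set.SurjOn]

end GenPoly

/-- For `n ≥ k ≥ 1`, `LB_{n,k}(1/23, q) = RS_{n,k}(12/3, q)`, both being
`Σ_{j=1}^{k} q^{j-1}` when `n > k` and `1` when `n = k`. -/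
theorem stmt14 (n k : ℕ) (hk : 1 ≤ k) (hkn : k ≤ n) :
    genPoly n k avoids1_23 lbStat = genPoly n k avoids12_3 rsStat ∧
    (k < n → genPoly n k avoids1_23 lbStat = ∑ j ∈ Finset.range k, (X : Polynomial ℕ) ^ j) ∧
    (k = n → genPoly n k avoids1_23 lbStat = 1) := by
  rcases hkn.lt_or_eq with hlt | rfl
  · rw [genPoly_avoids1_23_lbStat_of_lt hlt, genPoly_avoids12_3_rsStat_of_lt hlt]
    exact ⟨rfl, fun _ => rfl, fun h => absurd h hlt.ne⟩
  · have hmono := monotone_rgf_withBlock_singleton hk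
    rw [genPoly_self_eq_one hk (fun ⟨_, _, _, _, hbc, h, _⟩ =>
        hbc.ne (eq_of_inSameBlock_withBlock_singleton hk h)) (lbStat_eq_zero_of_monotone hmono),
      genPoly_self_eq_one hk (fun ⟨_, _, _, hab, _, h, _⟩ =>
        hab.ne (eq_of_inSameBlock_withBlock_singleton hk h)) (rsStat_eq_zero_of_monotone hmono)]
    exact ⟨rfl, fun h => absurd h (lt_irrefl k), fun _ => rfl⟩
end

section
/- For ⌈n/2⌉ ≤ k ≤ n, the degree of the polynomial RS_{n,k}(123, t) is (n-k)(k-1) and its leading coefficient is 1. -/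
open Finset Polynomial

/-!
Let `w` be the restricted growth function of a partition of `[n]` into `k` blocks of size at
most two, and call a pair of positions `a < b` with `w a = w b` an arc; there are `d = n - k` arcs.
A letter `v < w j` occurring to the right of `j` also occurs to its left (restricted growth), so
it is the letter of an arc spanning `j`. Hence `rs(w)` is at most the number of pairs
(arc `(a, b)`, position strictly between `a` and `b`), that is `∑ (b - a - 1)`. The left ends
`a` are `d` distinct positions, and so are the reflected right ends `n - 1 - b`; each of these
sums is therefore at least `0 + 1 + ⋯ + (d - 1)`, which gives
`rs(w) ≤ d (n - 1 - d) = (n-k)(k-1)`.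

In the equality case the left ends are `0, …, d - 1`, the right ends are `n - d, …, n - 1`, and
the letter of every arc spanning `j` is smaller than `w j`. The last condition forces the arcs to be
nested, so they are exactly `{i, n - 1 - i}` for `i < d`: the maximum is attained by the single
partition with restricted growth function `1 2 ⋯ k (n-k) ⋯ 2 1`, and the top monomial of the
generating polynomial is `t ^ ((n-k)(k-1))` with coefficient one.
-/

namespace Finset

lemma sum_range_card_le_sum (s : Finset ℕ) : ∑ i ∈ range #s, i ≤ ∑ i ∈ s, i := by
  induction s using Finset.induction_on_max with
  | empty => simp
  | insert a s ha ih =>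
    have has : a ∉ s := fun h => (ha a h).false
    have hcard : #s ≤ a :=
      (card_le_card fun x hx => mem_range.2 (ha x hx)).trans_eq (card_range a)
    rw [card_insert_of_notMem has, sum_range_succ, sum_insert has]
    omega

lemma eq_range_card_of_sum_le {s : Finset ℕ} (h : ∑ i ∈ s, i ≤ ∑ i ∈ range #s, i) :
    s = range #s := by
  induction s using Finset.induction_on_max with
  | empty => simp
  | insert a s ha ih =>
    have has : a ∉ s := fun h => (ha a h).false
    have hcard : #s ≤ a :=
      (card_le_card fun x hx => mem_range.2 (ha x hx)).trans_eq (card_range a)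
    have := sum_range_card_le_sum s
    rw [card_insert_of_notMem has, sum_range_succ, sum_insert has] at h
    rw [card_insert_of_notMem has, ih (by omega), card_range, show a = #s by omega, range_add_one]

variable {ι : Type*} {s : Finset ι} {f : ι → ℕ}

lemma sum_range_card_le_sum_of_injOn (hf : Set.InjOn f s) :
    ∑ i ∈ range #s, i ≤ ∑ x ∈ s, f x := by
  classical
  simpa [sum_image hf, card_image_of_injOn hf] using sum_range_card_le_sum (s.image f)

lemma image_eq_range_card_of_sum_le [DecidableEq ι] (hf : Set.InjOn f s)
    (h : ∑ x ∈ s, f x ≤ ∑ i ∈ range #s, i) : s.image f = range #s := by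
  have := eq_range_card_of_sum_le (s := s.image f) (by rwa [sum_image hf, card_image_of_injOn hf])
  rwa [card_image_of_injOn hf] at this

lemma card_filter_lt_eq [DecidableEq ι] (hf : Set.InjOn f s) (hs : s.image f = range #s) {x : ι}
    (hx : x ∈ s) : #{y ∈ s | f y < f x} = f x := by
  have himage : {y ∈ s | f y < f x}.image f = range (f x) := by
    ext i
    simp only [mem_image, mem_filter, mem_range]
    constructor
    · rintro ⟨y, ⟨-, hy⟩, rfl⟩
      exact hy
    · intro hi
      have hfx : f x < #s := mem_range.1 (hs ▸ mem_image_of_mem f hx)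
      obtain ⟨y, hy, rfl⟩ := mem_image.1 (hs ▸ mem_range.2 (hi.trans hfx))
      exact ⟨y, ⟨hy, hi⟩, rfl⟩
  rw [← card_image_of_injOn (f := f) (hf.mono (filter_subset _ _)), himage, card_range]

lemma card_image_eq_of_eq_iff_eq {β γ : Type*} [DecidableEq β] [DecidableEq γ] (s : Finset ι)
    {f : ι → β} {g : ι → γ} (h : ∀ a ∈ s, ∀ b ∈ s, f a = f b ↔ g a = g b) :
    #(s.image f) = #(s.image g) := by
  set t := s.image fun a => (f a, g a)
  have hfst : t.image Prod.fst = s.image f := by simp [t, image_image, Function.comp_def]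
  have hsnd : t.image Prod.snd = s.image g := by simp [t, image_image, Function.comp_def]
  rw [← hfst, ← hsnd, card_image_of_injOn (s := t), card_image_of_injOn (s := t)]
  all_goals
    rintro _ hx _ hy hxy
    obtain ⟨a, ha, rfl⟩ := mem_image.1 hx
    obtain ⟨b, hb, rfl⟩ := mem_image.1 hy
    have := h a ha b hb
    simp_all

end Finset

namespace Finpartition

variable {α : Type*} [DecidableEq α] {s : Finset α} (P : Finpartition s)

lemma image_part : s.image P.part = P.parts := by
  ext B
  constructor
  · intro h
    obtain ⟨i, hi, rfl⟩ := mem_image.1 h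
    exact P.part_mem.2 hi
  · intro hB
    obtain ⟨i, hi, rfl⟩ := P.part_surjOn hB
    exact mem_image_of_mem _ hi

lemma part_eq_part_of_min_eq [LinearOrder α] {a b : α} (ha : a ∈ s) (hb : b ∈ s)
    (h : (P.part a).min = (P.part b).min) : P.part a = P.part b := by
  obtain ⟨m, hm⟩ := Finset.min_of_nonempty (P.part_nonempty.2 ha)
  exact P.eq_of_mem_parts (P.part_mem.2 ha) (P.part_mem.2 hb) (mem_of_min hm)
    (mem_of_min (h ▸ hm))

end Finpartition

lemma Polynomial.monic_and_natDegree_sum_X_pow {R ι : Type*} [Semiring R] [Nontrivial R]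
    {s : Finset ι} {e : ι → ℕ} {x₀ : ι} (hx₀ : x₀ ∈ s)
    (hlt : ∀ x ∈ s, x ≠ x₀ → e x < e x₀) :
    (∑ x ∈ s, X ^ e x : R[X]).Monic ∧ (∑ x ∈ s, X ^ e x : R[X]).natDegree = e x₀ := by
  classical
  have hrest : (∑ x ∈ s.erase x₀, X ^ e x : R[X]).degree < e x₀ := by
    refine (degree_sum_le _ _).trans_lt
      ((Finset.sup_lt_iff (WithBot.bot_lt_coe _)).2 fun x hx => ?_)
    rw [degree_X_pow]
    exact_mod_cast hlt x (mem_of_mem_erase hx) (ne_of_mem_erase hx)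
  rw [← add_sum_erase s _ hx₀]
  exact ⟨monic_X_pow_add hrest,
    (natDegree_add_eq_left_of_degree_lt (by rwa [degree_X_pow])).trans (natDegree_X_pow _)⟩

namespace RGFWord

variable {n : ℕ}

def arcs (w : Fin n → ℕ) : Finset (Fin n × Fin n) := {p | p.1 < p.2 ∧ w p.1 = w p.2}

def spanning (A : Finset (Fin n × Fin n)) (j : Fin n) : Finset (Fin n × Fin n) :=
  {p ∈ A | p.1 < j ∧ j < p.2}

def nestedArcs (n d : ℕ) : Finset (Fin n × Fin n) := {p | (p.1 : ℕ) < d ∧ p.2 = p.1.rev}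

def rsLetters (w : Fin n → ℕ) (j : Fin n) : Finset ℕ :=
  ((univ.filter (fun i => j < i)).image w).filter (fun v => v < w j)

def IsGrowthRestricted (w : Fin n → ℕ) : Prop :=
  ∀ i j, w i < w j → ∃ i' < j, w i' = w i

def AtMostTwice (w : Fin n → ℕ) : Prop :=
  ∀ v, #{i | w i = v} ≤ 2

variable {w : Fin n → ℕ}

lemma mem_arcs {p : Fin n × Fin n} : p ∈ arcs w ↔ p.1 < p.2 ∧ w p.1 = w p.2 := by
  simp [arcs]

lemma mem_spanning {A : Finset (Fin n × Fin n)} {j : Fin n} {p : Fin n × Fin n} :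
    p ∈ spanning A j ↔ p ∈ A ∧ p.1 < j ∧ j < p.2 :=
  mem_filter

lemma mem_nestedArcs {d : ℕ} {p : Fin n × Fin n} :
    p ∈ nestedArcs n d ↔ (p.1 : ℕ) < d ∧ p.2 = p.1.rev := by
  simp [nestedArcs]

lemma rsStat_eq_sum_card_rsLetters (w : Fin n → ℕ) : rsStat w = ∑ j, #(rsLetters w j) := rfl

lemma eq_iff_eq_of_arcs_eq {w' : Fin n → ℕ} (h : arcs w = arcs w') (i j : Fin n) :
    w i = w j ↔ w' i = w' j := by
  have key : ∀ a b, a < b → (w a = w b ↔ w' a = w' b) := fun a b hab => by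
    simpa [mem_arcs, hab] using congrArg ((a, b) ∈ ·) h
  rcases lt_trichotomy i j with hij | rfl | hij
  · exact key i j hij
  · simp
  · rw [eq_comm, key j i hij, eq_comm]

lemma arcs_eq_of_eq_iff_eq {w' : Fin n → ℕ} (h : ∀ i j, w i = w j ↔ w' i = w' j) :
    arcs w = arcs w' := by
  ext p
  simp [mem_arcs, h]

namespace AtMostTwice

lemma eq_or_eq_or_eq (h : AtMostTwice w) {a b c : Fin n} (hab : w a = w b) (hac : w a = w c) :
    a = b ∨ a = c ∨ b = c := by
  by_contra! hne
  exact (h (w a)).not_gt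
    (two_lt_card_iff.2 ⟨a, b, c, by simp, by simp [hab], by simp [hac], hne⟩)

lemma injOn_fst (h : AtMostTwice w) : Set.InjOn Prod.fst (arcs w : Set (Fin n × Fin n)) := by
  rintro ⟨a, b⟩ hp ⟨a', b'⟩ hq (rfl : a = a')
  simp only [mem_coe, mem_arcs] at hp hq
  rcases h.eq_or_eq_or_eq hp.2 hq.2 with h | h | rfl <;> first | rfl | omega

lemma injOn_snd (h : AtMostTwice w) : Set.InjOn Prod.snd (arcs w : Set (Fin n × Fin n)) := by
  rintro ⟨a, b⟩ hp ⟨a', b'⟩ hq (rfl : b = b')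
  simp only [mem_coe, mem_arcs] at hp hq
  rcases h.eq_or_eq_or_eq hp.2.symm hq.2.symm with h | h | rfl <;> first | rfl | omega

lemma injOn_val_fst (h : AtMostTwice w) :
    Set.InjOn (fun p : Fin n × Fin n => (p.1 : ℕ)) (arcs w) :=
  Fin.val_injective.comp_injOn h.injOn_fst

lemma injOn_val_rev_snd (h : AtMostTwice w) :
    Set.InjOn (fun p : Fin n × Fin n => (p.2.rev : ℕ)) (arcs w) :=
  (Fin.val_injective.comp Fin.rev_injective).comp_injOn h.injOn_snd

lemma fst_ne_snd (h : AtMostTwice w) {p q : Fin n × Fin n} (hp : p ∈ arcs w)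
    (hq : q ∈ arcs w) : p.1 ≠ q.2 := by
  rw [mem_arcs] at hp hq
  intro hpq
  rcases h.eq_or_eq_or_eq hq.2 (hq.2.trans (hpq ▸ hp.2)) with h | h | h <;> omega

lemma injOn_letter (h : AtMostTwice w) :
    Set.InjOn (fun p => w p.1) (arcs w : Set (Fin n × Fin n)) := by
  intro p hp q hq hpq
  rcases h.eq_or_eq_or_eq (mem_arcs.1 hp).2 hpq with h' | h' | h'
  · exact absurd h' (mem_arcs.1 hp).1.ne
  · exact h.injOn_fst hp hq h'
  · exact absurd h' (h.fst_ne_snd hq hp).symm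

lemma two_mul_card_arcs_le (h : AtMostTwice w) : 2 * #(arcs w) ≤ n := by
  have hdisj : Disjoint ((arcs w).image Prod.fst) ((arcs w).image Prod.snd) := by
    simp only [disjoint_left, mem_image]
    rintro _ ⟨p, hp, rfl⟩ ⟨q, hq, hpq⟩
    exact h.fst_ne_snd hp hq hpq.symm
  calc 2 * #(arcs w) = #((arcs w).image Prod.fst ∪ (arcs w).image Prod.snd) := by
        rw [card_union_of_disjoint hdisj, card_image_of_injOn h.injOn_fst,
          card_image_of_injOn h.injOn_snd, two_mul]
    _ ≤ n := card_le_univ _ |>.trans_eq (Fintype.card_fin n)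

/-- Positions that are not right ends of arcs carry pairwise distinct letters, one for each
letter of `w`. -/
lemma card_image_add_card_arcs (h : AtMostTwice w) : #(univ.image w) + #(arcs w) = n := by
  set R := (arcs w).image Prod.snd
  have hfirst : Set.InjOn w (Rᶜ : Finset (Fin n)) := by
    intro i hi j hj hij
    by_contra hne
    rcases lt_or_gt_of_ne hne with hlt | hlt
    · exact mem_compl.1 hj (mem_image.2 ⟨(i, j), mem_arcs.2 ⟨hlt, hij⟩, rfl⟩)
    · exact mem_compl.1 hi (mem_image.2 ⟨(j, i), mem_arcs.2 ⟨hlt, hij.symm⟩, rfl⟩)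
  have himage : Rᶜ.image w = univ.image w := by
    refine (image_subset_image (subset_univ _)).antisymm fun v hv => ?_
    obtain ⟨j, -, rfl⟩ := mem_image.1 hv
    have hne : ({i | w i = w j} : Finset (Fin n)).Nonempty := ⟨j, by simp⟩
    set i := min' _ hne
    have hi : w i = w j := by simpa using min'_mem _ hne
    refine mem_image.2 ⟨i, mem_compl.2 fun hR => ?_, hi⟩
    obtain ⟨p, hp, hpi⟩ := mem_image.1 hR
    have hp' := mem_arcs.1 hp
    have : i ≤ p.1 := min'_le _ _ (by simp [hp'.2, hpi, hi])
    exact absurd (hpi ▸ hp'.1) this.not_gt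
  rw [← himage, card_image_of_injOn hfirst, ← card_image_of_injOn h.injOn_snd, card_compl,
    Fintype.card_fin, Nat.sub_add_cancel (card_le_univ _ |>.trans_eq (Fintype.card_fin n))]

end AtMostTwice

lemma rsLetters_subset_image_spanning (hg : IsGrowthRestricted w) (j : Fin n) :
    rsLetters w j ⊆ (spanning (arcs w) j).image (fun p => w p.1) := by
  intro v hv
  simp only [rsLetters, mem_filter, mem_image, mem_univ, true_and] at hv
  obtain ⟨⟨b, hjb, rfl⟩, hlt⟩ := hv
  obtain ⟨a, haj, hab⟩ := hg b j hlt
  have hab' : (a, b) ∈ arcs w := mem_arcs.2 ⟨haj.trans hjb, hab⟩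
  exact mem_image.2 ⟨(a, b), mem_spanning.2 ⟨hab', haj, hjb⟩, hab⟩

lemma card_rsLetters_le (hg : IsGrowthRestricted w) (j : Fin n) :
    #(rsLetters w j) ≤ #(spanning (arcs w) j) :=
  (card_le_card (rsLetters_subset_image_spanning hg j)).trans card_image_le

lemma card_rsLetters_eq_iff (h2 : AtMostTwice w) (hg : IsGrowthRestricted w) (j : Fin n) :
    #(rsLetters w j) = #(spanning (arcs w) j) ↔ ∀ p ∈ spanning (arcs w) j, w p.1 < w j := by
  have hsub := rsLetters_subset_image_spanning hg j
  rw [← card_image_of_injOn (s := spanning (arcs w) j)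
    (h2.injOn_letter.mono (coe_subset.2 (filter_subset _ _)))]
  constructor
  · intro h p hp
    have hmem := mem_image_of_mem (fun p : Fin n × Fin n => w p.1) hp
    rw [← eq_of_subset_of_card_le hsub h.ge] at hmem
    exact (mem_filter.1 hmem).2
  · intro h
    congr 1
    refine hsub.antisymm fun v hv => ?_
    obtain ⟨p, hp, rfl⟩ := mem_image.1 hv
    obtain ⟨hpA, -, hjp⟩ := mem_spanning.1 hp
    simp only [rsLetters, mem_filter, mem_image, mem_univ, true_and]
    exact ⟨⟨p.2, hjp, (mem_arcs.1 hpA).2.symm⟩, h p hp⟩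

lemma sum_card_spanning (A : Finset (Fin n × Fin n)) :
    ∑ j, #(spanning A j) = ∑ p ∈ A, ((p.2 : ℕ) - p.1 - 1) := by
  simp only [spanning, card_filter]
  rw [sum_comm]
  refine sum_congr rfl fun p _ => ?_
  rw [← card_filter, ← Fin.card_Ioo]
  congr 1
  ext j
  simp

section Gap

variable {A : Finset (Fin n × Fin n)}

/-- Each arc `(a, b)` has `(b - a - 1) + a + (n - 1 - b) = n - 2`. The left ends, and the
reflected right ends, are `#A` distinct naturals, so their sums are at least `0 + ⋯ + (#A - 1)`
and the two truncated subtractions are exact. -/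
lemma sum_gap_add_excess (hA : ∀ p ∈ A, p.1 < p.2)
    (hF : Set.InjOn (fun p : Fin n × Fin n => (p.1 : ℕ)) A)
    (hR : Set.InjOn (fun p : Fin n × Fin n => (p.2.rev : ℕ)) A) :
    ∑ p ∈ A, ((p.2 : ℕ) - p.1 - 1) + (∑ p ∈ A, (p.1 : ℕ) - ∑ i ∈ range #A, i) +
      (∑ p ∈ A, (p.2.rev : ℕ) - ∑ i ∈ range #A, i) = #A * (n - 1 - #A) := by
  have htotal : ∑ p ∈ A, ((p.2 : ℕ) - p.1 - 1) + ∑ p ∈ A, (p.1 : ℕ) +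
      ∑ p ∈ A, (p.2.rev : ℕ) = #A * (n - 2) := by
    rw [← sum_add_distrib, ← sum_add_distrib, ← smul_eq_mul, ← sum_const]
    refine sum_congr rfl fun p hp => ?_
    have := hA p hp
    simp only [Fin.val_rev]
    omega
  have hleF := sum_range_card_le_sum_of_injOn hF
  have hleR := sum_range_card_le_sum_of_injOn hR
  have hgauss := sum_range_id_mul_two #A
  have hsplit : #A * (n - 1 - #A) + #A * (#A - 1) = #A * (n - 2) := by
    rcases Nat.eq_zero_or_pos #A with h0 | hpos
    · simp [h0]
    · have := Nat.le_of_mul_le_mul_left (show #A * (#A - 1) ≤ #A * (n - 2) by omega) hpos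
      rw [← mul_add]
      congr 1
      omega
  omega

lemma sum_gap_le (hA : ∀ p ∈ A, p.1 < p.2)
    (hF : Set.InjOn (fun p : Fin n × Fin n => (p.1 : ℕ)) A)
    (hR : Set.InjOn (fun p : Fin n × Fin n => (p.2.rev : ℕ)) A) :
    ∑ p ∈ A, ((p.2 : ℕ) - p.1 - 1) ≤ #A * (n - 1 - #A) := by
  have := sum_gap_add_excess hA hF hR
  omega

lemma sum_gap_eq_iff (hA : ∀ p ∈ A, p.1 < p.2)
    (hF : Set.InjOn (fun p : Fin n × Fin n => (p.1 : ℕ)) A)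
    (hR : Set.InjOn (fun p : Fin n × Fin n => (p.2.rev : ℕ)) A) :
    ∑ p ∈ A, ((p.2 : ℕ) - p.1 - 1) = #A * (n - 1 - #A) ↔
      A.image (fun p => (p.1 : ℕ)) = range #A ∧
        A.image (fun p => (p.2.rev : ℕ)) = range #A := by
  have := sum_gap_add_excess hA hF hR
  constructor
  · intro h
    exact ⟨image_eq_range_card_of_sum_le hF (by omega),
      image_eq_range_card_of_sum_le hR (by omega)⟩
  · rintro ⟨h1, h2⟩
    have e1 : ∑ p ∈ A, (p.1 : ℕ) = ∑ i ∈ range #A, i := by rw [← h1, sum_image hF]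
    have e2 : ∑ p ∈ A, (p.2.rev : ℕ) = ∑ i ∈ range #A, i := by rw [← h2, sum_image hR]
    omega

end Gap

lemma image_val_fst_nestedArcs {d : ℕ} (hd : d ≤ n) :
    (nestedArcs n d).image (fun p => (p.1 : ℕ)) = range d := by
  ext i
  simp only [mem_image, mem_nestedArcs, mem_range]
  constructor
  · rintro ⟨p, ⟨hp, -⟩, rfl⟩
    exact hp
  · intro hi
    exact ⟨(⟨i, by omega⟩, Fin.rev ⟨i, by omega⟩), ⟨hi, rfl⟩, rfl⟩

lemma image_val_rev_snd_nestedArcs {d : ℕ} (hd : d ≤ n) :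
    (nestedArcs n d).image (fun p => (p.2.rev : ℕ)) = range d := by
  rw [← image_val_fst_nestedArcs hd]
  refine image_congr fun p hp => ?_
  simp [(mem_nestedArcs.1 hp).2]

/-- Spanning arcs having smaller letters makes the arcs nested; then the `i`-th smallest left end
and the `i`-th smallest reflected right end belong to the same arc, so both equal `i`. -/
lemma arcs_eq_nestedArcs_of_spanning_lt (h2 : AtMostTwice w) (hg : IsGrowthRestricted w)
    (hspan : ∀ j, ∀ p ∈ spanning (arcs w) j, w p.1 < w j)
    (hfst : (arcs w).image (fun p => (p.1 : ℕ)) = range #(arcs w))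
    (hsnd : (arcs w).image (fun p => (p.2.rev : ℕ)) = range #(arcs w)) :
    arcs w = nestedArcs n #(arcs w) := by
  have hd := h2.two_mul_card_arcs_le
  have hlt_fst : ∀ p ∈ arcs w, (p.1 : ℕ) < #(arcs w) := fun p hp =>
    mem_range.1 (hfst ▸ mem_image_of_mem (fun p : Fin n × Fin n => (p.1 : ℕ)) hp)
  have hlt_snd : ∀ p ∈ arcs w, (p.2.rev : ℕ) < #(arcs w) := fun p hp =>
    mem_range.1 (hsnd ▸ mem_image_of_mem (fun p : Fin n × Fin n => (p.2.rev : ℕ)) hp)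
  have hnested : ∀ p ∈ arcs w, ∀ q ∈ arcs w, p.1 < q.1 → q.2 < p.2 := by
    intro p hp q hq hpq
    by_contra! hle
    have hne : p.2 ≠ q.2 := fun h => hpq.ne (congrArg Prod.fst (h2.injOn_snd hp hq h))
    have hq_span : q ∈ spanning (arcs w) p.2 := by
      have := hlt_fst q hq
      have := hlt_snd p hp
      simp only [Fin.val_rev] at this
      exact mem_spanning.2 ⟨hq, by omega, lt_of_le_of_ne hle hne⟩
    obtain ⟨i, hi, hwi⟩ := hg q.1 p.1 ((mem_arcs.1 hp).2 ▸ hspan _ q hq_span)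
    have := (mem_arcs.1 hq).1
    rcases h2.eq_or_eq_or_eq hwi (hwi.trans (mem_arcs.1 hq).2) with h | h | h <;> omega
  have hrev : ∀ p ∈ arcs w, p.2 = p.1.rev := by
    intro p hp
    have hrank := (card_filter_lt_eq h2.injOn_val_fst hfst hp).symm.trans
      ((congrArg card (filter_congr fun q hq => ?_)).trans
        (card_filter_lt_eq h2.injOn_val_rev_snd hsnd hp))
    · rw [← Fin.rev_rev p.2]
      exact congrArg Fin.rev (Fin.ext hrank).symm
    · simp only [Fin.val_rev]
      constructor
      · intro h
        have := hnested q hq p hp h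
        omega
      · intro h
        rcases lt_trichotomy q.1 p.1 with hlt | heq | hgt
        · exact hlt
        · rw [h2.injOn_fst hq hp heq] at h
          omega
        · have := hnested p hp q hq hgt
          omega
  ext p
  refine ⟨fun hp => mem_nestedArcs.2 ⟨hlt_fst p hp, hrev p hp⟩, fun hp => ?_⟩
  obtain ⟨hp1, hp2⟩ := mem_nestedArcs.1 hp
  obtain ⟨q, hq, hqp⟩ := mem_image.1 (hfst ▸ mem_range.2 hp1)
  have hq1 : q.1 = p.1 := Fin.ext hqp
  have : q = p := Prod.ext hq1 (by rw [hrev q hq, hp2, hq1])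
  exact this ▸ hq

lemma lt_of_mem_spanning_of_arcs_eq_nestedArcs (hg : IsGrowthRestricted w) {d : ℕ}
    (h : arcs w = nestedArcs n d) {j : Fin n} {p : Fin n × Fin n}
    (hp : p ∈ spanning (arcs w) j) : w p.1 < w j := by
  have key : ∀ a b, a < b → w a = w b → (a : ℕ) < d ∧ b = a.rev := fun a b hab he =>
    mem_nestedArcs.1 (h ▸ (mem_arcs (p := (a, b))).2 ⟨hab, he⟩)
  obtain ⟨hpA, hpj, hjp⟩ := mem_spanning.1 hp
  have hp' := key p.1 p.2 (mem_arcs.1 hpA).1 (mem_arcs.1 hpA).2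
  by_contra! hle
  rcases hle.lt_or_eq with hlt | heq
  · obtain ⟨i, hi, hwi⟩ := hg j p.1 hlt
    have hij := key i j (hi.trans hpj) hwi
    simp only [Fin.ext_iff, Fin.val_rev] at hp' hij
    omega
  · have := key p.1 j hpj heq.symm
    simp only [Fin.ext_iff, Fin.val_rev] at hp' this
    omega

theorem rsStat_le (h2 : AtMostTwice w) (hg : IsGrowthRestricted w) :
    rsStat w ≤ #(arcs w) * (n - 1 - #(arcs w)) :=
  calc rsStat w = ∑ j, #(rsLetters w j) := rsStat_eq_sum_card_rsLetters w
    _ ≤ ∑ j, #(spanning (arcs w) j) := sum_le_sum fun j _ => card_rsLetters_le hg j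
    _ = ∑ p ∈ arcs w, ((p.2 : ℕ) - p.1 - 1) := sum_card_spanning _
    _ ≤ _ := sum_gap_le (fun _ hp => (mem_arcs.1 hp).1) h2.injOn_val_fst h2.injOn_val_rev_snd

theorem rsStat_eq_iff (h2 : AtMostTwice w) (hg : IsGrowthRestricted w) :
    rsStat w = #(arcs w) * (n - 1 - #(arcs w)) ↔ arcs w = nestedArcs n #(arcs w) := by
  have hA : ∀ p ∈ arcs w, p.1 < p.2 := fun _ hp => (mem_arcs.1 hp).1
  have hle : ∑ j, #(rsLetters w j) ≤ ∑ j, #(spanning (arcs w) j) :=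
    sum_le_sum fun j _ => card_rsLetters_le hg j
  have hgap := sum_card_spanning (arcs w) ▸ sum_gap_le hA h2.injOn_val_fst h2.injOn_val_rev_snd
  calc rsStat w = #(arcs w) * (n - 1 - #(arcs w))
      ↔ ∑ j, #(rsLetters w j) = ∑ j, #(spanning (arcs w) j) ∧
        ∑ j, #(spanning (arcs w) j) = #(arcs w) * (n - 1 - #(arcs w)) := by
        rw [rsStat_eq_sum_card_rsLetters]
        omega
    _ ↔ (∀ j, ∀ p ∈ spanning (arcs w) j, w p.1 < w j) ∧
        ((arcs w).image (fun p => (p.1 : ℕ)) = range #(arcs w) ∧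
          (arcs w).image (fun p => (p.2.rev : ℕ)) = range #(arcs w)) := by
        rw [sum_eq_sum_iff_of_le fun j _ => card_rsLetters_le hg j, sum_card_spanning,
          sum_gap_eq_iff hA h2.injOn_val_fst h2.injOn_val_rev_snd]
        simp only [mem_univ, true_implies, card_rsLetters_eq_iff h2 hg]
    _ ↔ arcs w = nestedArcs n #(arcs w) := by
        refine ⟨fun h => arcs_eq_nestedArcs_of_spanning_lt h2 hg h.1 h.2.1 h.2.2, fun h => ?_⟩
        have hd : #(arcs w) ≤ n := by have := h2.two_mul_card_arcs_le; omega
        refine ⟨fun j _ hp => lt_of_mem_spanning_of_arcs_eq_nestedArcs hg h hp, ?_, ?_⟩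
        · exact (congrArg (image fun p : Fin n × Fin n => (p.1 : ℕ)) h).trans
            (image_val_fst_nestedArcs hd)
        · exact (congrArg (image fun p : Fin n × Fin n => (p.2.rev : ℕ)) h).trans
            (image_val_rev_snd_nestedArcs hd)

end RGFWord

namespace SetPartition

open RGFWord

variable {n k : ℕ}

lemma blockOf_eq_part (P : SP n) (i : Fin n) : blockOf P i = P.part i := by
  have : P.parts.filter (fun B => i ∈ B) = {P.part i} := by
    ext B
    simp only [mem_filter, mem_singleton]
    constructor
    · rintro ⟨hB, hi⟩
      exact (P.part_eq_of_mem hB hi).symm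
    · rintro rfl
      exact ⟨P.part_mem.2 (mem_univ i), P.mem_part (mem_univ i)⟩
  rw [blockOf, this, sup_singleton, id]

lemma rgf_eq_card (P : SP n) (i : Fin n) :
    rgf P i = #{B ∈ P.parts | B.min ≤ (P.part i).min} := by
  rw [rgf, blockOf_eq_part]

lemma rgf_le_rgf_iff (P : SP n) {i j : Fin n} :
    rgf P i ≤ rgf P j ↔ (P.part i).min ≤ (P.part j).min := by
  rw [rgf_eq_card, rgf_eq_card]
  constructor
  · intro h
    by_contra! hlt
    refine h.not_gt (card_lt_card ((ssubset_iff_of_subset ?_).2 ⟨P.part i, ?_, ?_⟩))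
    · intro B hB
      simp only [mem_filter] at hB ⊢
      exact ⟨hB.1, hB.2.trans hlt.le⟩
    · exact mem_filter.2 ⟨P.part_mem.2 (mem_univ i), le_rfl⟩
    · exact fun hmem => (mem_filter.1 hmem).2.not_gt hlt
  · intro h
    refine card_le_card fun B hB => ?_
    simp only [mem_filter] at hB ⊢
    exact ⟨hB.1, hB.2.trans h⟩

lemma rgf_eq_rgf_iff (P : SP n) {i j : Fin n} : rgf P i = rgf P j ↔ P.part i = P.part j := by
  refine ⟨fun h => P.part_eq_part_of_min_eq (mem_univ i) (mem_univ j) ?_,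
    fun h => by rw [rgf_eq_card, rgf_eq_card, h]⟩
  exact le_antisymm ((rgf_le_rgf_iff P).1 h.le) ((rgf_le_rgf_iff P).1 h.ge)

lemma isGrowthRestricted_rgf (P : SP n) : IsGrowthRestricted (rgf P) := by
  intro i j hij
  have hmin : (P.part i).min < (P.part j).min := lt_of_not_ge ((rgf_le_rgf_iff P).not.1 hij.not_ge)
  have hne := P.part_nonempty.2 (mem_univ i)
  refine ⟨(P.part i).min' hne, ?_, (rgf_eq_rgf_iff P).2 ?_⟩
  · rw [← WithTop.coe_lt_coe, coe_min']
    exact hmin.trans_le (Finset.min_le (P.mem_part (mem_univ j)))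
  · exact P.part_eq_of_mem (P.part_mem.2 (mem_univ i)) (min'_mem _ hne)

lemma atMostTwice_rgf (P : SP n) (hP : avoids123 P) : AtMostTwice (rgf P) := by
  intro v
  rcases (univ.filter fun i => rgf P i = v).eq_empty_or_nonempty with h | ⟨i, hi⟩
  · simp [h]
  · have : (univ.filter fun j => rgf P j = v) = P.part i := by
      ext j
      rw [mem_filter, ← (mem_filter.1 hi).2, rgf_eq_rgf_iff P,
        P.mem_part_iff_part_eq_part (mem_univ j) (mem_univ i)]
      simp
    rw [this]
    exact hP _ (P.part_mem.2 (mem_univ i))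

lemma card_arcs_rgf (P : SP n) (hP : avoids123 P) : #(arcs (rgf P)) = n - #P.parts := by
  have := (atMostTwice_rgf P hP).card_image_add_card_arcs
  rw [card_image_eq_of_eq_iff_eq _ fun i _ j _ => rgf_eq_rgf_iff P, P.image_part] at this
  omega

lemma eq_of_arcs_rgf_eq {P Q : SP n} (h : arcs (rgf P) = arcs (rgf Q)) : P = Q := by
  have hpart : P.part = Q.part := by
    funext i
    ext j
    rw [P.mem_part_iff_part_eq_part (mem_univ j) (mem_univ i),
      Q.mem_part_iff_part_eq_part (mem_univ j) (mem_univ i), ← rgf_eq_rgf_iff P,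
      ← rgf_eq_rgf_iff Q, eq_iff_eq_of_arcs_eq h]
  exact Finpartition.ext (by rw [← P.image_part, ← Q.image_part, hpart])

def extremalWord (n k : ℕ) (i : Fin n) : ℕ := if (i : ℕ) < k then i + 1 else n - i

open Classical in
noncomputable def extremalPartition (n k : ℕ) : SP n :=
  Finpartition.ofSetoid (Setoid.ker (extremalWord n k))

lemma part_extremalPartition_eq_iff {i j : Fin n} :
    (extremalPartition n k).part i = (extremalPartition n k).part j ↔
      extremalWord n k i = extremalWord n k j := by
  classical
  rw [← Finpartition.mem_part_iff_part_eq_part _ (mem_univ i) (mem_univ j), extremalPartition,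
    Finpartition.mem_part_ofSetoid_iff_rel, Setoid.ker_def, eq_comm]

lemma image_extremalWord (hkn : k ≤ n) (h2k : n ≤ 2 * k) :
    univ.image (extremalWord n k) = Icc 1 k := by
  ext v
  simp only [mem_image, mem_univ, true_and, mem_Icc, extremalWord]
  constructor
  · rintro ⟨i, rfl⟩
    split_ifs <;> omega
  · intro hv
    exact ⟨⟨v - 1, by omega⟩, by simp only [if_pos (show v - 1 < k by omega)]; omega⟩

lemma arcs_extremalWord (hkn : k ≤ n) (h2k : n ≤ 2 * k) :
    arcs (extremalWord n k) = nestedArcs n (n - k) := by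
  ext ⟨a, b⟩
  simp only [mem_arcs, mem_nestedArcs, extremalWord, Fin.ext_iff, Fin.lt_def, Fin.val_rev]
  split_ifs <;> omega

lemma card_parts_extremalPartition (hkn : k ≤ n) (h2k : n ≤ 2 * k) :
    #(extremalPartition n k).parts = k := by
  rw [← Finpartition.image_part, card_image_eq_of_eq_iff_eq _ fun i _ j _ =>
    part_extremalPartition_eq_iff, image_extremalWord hkn h2k, Nat.card_Icc, Nat.add_sub_cancel]

lemma avoids123_extremalPartition : avoids123 (extremalPartition n k) := by
  intro B hB
  obtain ⟨i, -, rfl⟩ := Finpartition.part_surjOn _ hB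
  refine (card_le_card (t := {i, i.rev}) fun j hj => ?_).trans card_le_two
  have := (part_extremalPartition_eq_iff (k := k)).1
    ((Finpartition.mem_part_iff_part_eq_part _ (mem_univ j) (mem_univ i)).1 hj)
  simp only [extremalWord, Fin.ext_iff, Fin.val_rev, mem_insert, mem_singleton] at this ⊢
  split_ifs at this <;> omega

lemma arcs_rgf_extremalPartition :
    arcs (rgf (extremalPartition n k)) = arcs (extremalWord n k) :=
  arcs_eq_of_eq_iff_eq fun _ _ => (rgf_eq_rgf_iff _).trans part_extremalPartition_eq_iff

theorem rsStat_rgf_le (P : SP n) (hP : avoids123 P) :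
    rsStat (rgf P) ≤ (n - #P.parts) * (#P.parts - 1) := by
  have hle := rsStat_le (atMostTwice_rgf P hP) (isGrowthRestricted_rgf P)
  have hkn : #P.parts ≤ n := P.card_parts_le_card.trans_eq (card_fin n)
  rwa [card_arcs_rgf P hP, show n - 1 - (n - #P.parts) = #P.parts - 1 by omega] at hle

theorem rsStat_rgf_eq_iff (P : SP n) (hP : avoids123 P) (hk : #P.parts = k) (h2k : n ≤ 2 * k) :
    rsStat (rgf P) = (n - k) * (k - 1) ↔ P = extremalPartition n k := by
  have hkn : k ≤ n := hk ▸ P.card_parts_le_card.trans_eq (card_fin n)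
  rw [show (n - k) * (k - 1) = #(arcs (rgf P)) * (n - 1 - #(arcs (rgf P))) by
      rw [card_arcs_rgf P hP, hk, show n - 1 - (n - k) = k - 1 by omega],
    rsStat_eq_iff (atMostTwice_rgf P hP) (isGrowthRestricted_rgf P), card_arcs_rgf P hP, hk,
    ← arcs_extremalWord hkn h2k, ← arcs_rgf_extremalPartition]
  exact ⟨eq_of_arcs_rgf_eq, fun h => h ▸ rfl⟩

end SetPartition

open SetPartition in
/-- For `⌈n/2⌉ ≤ k ≤ n`, the degree of `RS_{n,k}(123, t)` is `(n-k)(k-1)`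
and its leading coefficient is `1`. -/
theorem stmt18 (n k : ℕ) (h1 : (n + 1) / 2 ≤ k) (h2 : k ≤ n) :
    (genPoly n k avoids123 rsStat).natDegree = (n - k) * (k - 1) ∧
    (genPoly n k avoids123 rsStat).leadingCoeff = 1 := by
  classical
  have h2k : n ≤ 2 * k := by omega
  have hk₀ := card_parts_extremalPartition h2 h2k
  have hrs₀ := (rsStat_rgf_eq_iff _ avoids123_extremalPartition hk₀ h2k).2 rfl
  suffices h : (genPoly n k avoids123 rsStat).Monic ∧
      (genPoly n k avoids123 rsStat).natDegree = rsStat (rgf (extremalPartition n k)) from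
    ⟨h.2.trans hrs₀, h.1.leadingCoeff⟩
  refine monic_and_natDegree_sum_X_pow
    (mem_filter.2 ⟨mem_univ _, hk₀, avoids123_extremalPartition⟩) fun P hP hne => ?_
  obtain ⟨hk, hav⟩ := (mem_filter.1 hP).2
  rw [hrs₀]
  exact lt_of_le_of_ne (hk ▸ rsStat_rgf_le P hav) (mt (rsStat_rgf_eq_iff P hav hk h2k).1 hne)
end
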